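/- arXiv:2505.08476 — 7 statements merged into one kernel-verified Lean document; each statement's English description precedes it below -/
import Mathlib

section
/- Let 0 < r < 1. If Y is a closed subset of ℂ \ {0}, then the image κ(Y) under the map κ(z) = (z/√(1+r²), r·z⁻¹/√(1+r²)) is a closed subset of ℂ². -/
/-! The map `z ↦ (a z, b z⁻¹)` with `a, b ≠ 0` carries `C ∖ {0}` onto the intersection of the
hyperbola `xy = ab` with the preimage of `C` under `(x, y) ↦ a⁻¹ x`; both are closed. The
hyperbola avoids the axes, which is why removing the point `0` does no harm. -/

section InvGraph

variable {K : Type*} [Field K]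

theorem image_mul_inv_eq_hyperbola_inter {a b : K} (ha : a ≠ 0) (hb : b ≠ 0) (C : Set K) :
    (fun z : K => (a * z, b * z⁻¹)) '' (C ∩ {z | z ≠ 0}) =
      {p : K × K | p.1 * p.2 = a * b} ∩ (fun p : K × K => a⁻¹ * p.1) ⁻¹' C := by
  ext ⟨x, y⟩
  simp only [Set.mem_image, Set.mem_inter_iff, Set.mem_ofPred_eq, Set.mem_preimage, Prod.mk.injEq]
  constructor
  · rintro ⟨z, ⟨hzC, hz⟩, rfl, rfl⟩
    refine ⟨?_, by rwa [inv_mul_cancel_left₀ ha]⟩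
    field_simp
  · rintro ⟨hxy, hxC⟩
    have hx : x ≠ 0 := by
      rintro rfl
      exact mul_ne_zero ha hb (by simpa using hxy.symm)
    refine ⟨a⁻¹ * x, ⟨hxC, by simp [ha, hx]⟩, by rw [mul_inv_cancel_left₀ ha], ?_⟩
    rw [eq_div_of_mul_eq hx (by rw [mul_comm, hxy] : y * x = a * b)]
    field_simp

variable [TopologicalSpace K] [ContinuousMul K] [T1Space K]

theorem isClosed_image_mul_inv {a b : K} (ha : a ≠ 0) (hb : b ≠ 0) {C : Set K}
    (hC : IsClosed C) : IsClosed ((fun z : K => (a * z, b * z⁻¹)) '' (C ∩ {z | z ≠ 0})) := by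
  rw [image_mul_inv_eq_hyperbola_inter ha hb]
  exact (isClosed_singleton.preimage (by fun_prop)).inter (hC.preimage (by fun_prop))

end InvGraph

theorem stmt3_general (r : ℝ) (hr0 : 0 < r) (Y : Set ℂ)
    (hY : ∃ C : Set ℂ, IsClosed C ∧ Y = C ∩ {z : ℂ | z ≠ 0}) :
    IsClosed ((fun z : ℂ => (z / (Real.sqrt (1 + r ^ 2) : ℂ),
        (r : ℂ) * z⁻¹ / (Real.sqrt (1 + r ^ 2) : ℂ))) '' Y) := by
  obtain ⟨C, hC, rfl⟩ := hY
  set s : ℂ := (Real.sqrt (1 + r ^ 2) : ℂ)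
  have hs : s ≠ 0 := Complex.ofReal_ne_zero.mpr (Real.sqrt_pos.mpr (by positivity)).ne'
  have hr : (r : ℂ) ≠ 0 := Complex.ofReal_ne_zero.mpr hr0.ne'
  have hκ : (fun z : ℂ => (z / s, (r : ℂ) * z⁻¹ / s)) = fun z => (s⁻¹ * z, (r / s) * z⁻¹) := by
    funext z
    rw [div_eq_inv_mul, mul_div_right_comm]
  rw [hκ]
  exact isClosed_image_mul_inv (inv_ne_zero hs) (div_ne_zero hr hs) hC

/-- If `Y` is a closed subset of `ℂ \ {0}` (i.e. `Y = C ∩ (ℂ \ {0})` for some closed `C`),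
then the image `κ(Y)` is closed in `ℂ²`, where `κ(z) = (z/√(1+r²), r·z⁻¹/√(1+r²))`. -/
theorem stmt3 (r : ℝ) (hr0 : 0 < r) (hr1 : r < 1) (Y : Set ℂ)
    (hY : ∃ C : Set ℂ, IsClosed C ∧ Y = C ∩ {z : ℂ | z ≠ 0}) :
    IsClosed ((fun z : ℂ => (z / (Real.sqrt (1 + r ^ 2) : ℂ),
        (r : ℂ) * z⁻¹ / (Real.sqrt (1 + r ^ 2) : ℂ))) '' Y) :=
  stmt3_general r hr0 Y hY
end

section
/- Let K ⊆ ℂⁿ be a polynomially convex compact set and let p be a complex polynomial in n variables such that Z(p) ∩ K is nonempty. Then Z(p) ∩ K is polynomially convex. -/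
/-!
Off `K` the polynomial separating `x` from `K` also separates it from the smaller set
`Z(p) ∩ K`; on `K \ Z(p)` the polynomial `p` itself does, since `|p| ≡ 0` on `Z(p)` while
`p(x) ≠ 0`.
-/

open MvPolynomial

theorem Real.sSup_le_sSup_of_subset_of_nonneg {s t : Set ℝ} (hst : s ⊆ t) (ht : BddAbove t)
    (ht₀ : ∀ x ∈ t, 0 ≤ x) : sSup s ≤ sSup t :=
  Real.sSup_le (fun _ hx => le_csSup ht (hst hx)) (Real.sSup_nonneg ht₀)

section PolynomiallySeparated

variable {σ : Type*}

def PolynomiallySeparated (X : Set (σ → ℂ)) (x : σ → ℂ) : Prop :=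
  ∃ f : MvPolynomial σ ℂ, sSup ((fun z => ‖eval z f‖) '' X) < ‖eval x f‖

theorem PolynomiallySeparated.mono {S K : Set (σ → ℂ)} {x : σ → ℂ} (hK : IsCompact K)
    (hSK : S ⊆ K) : PolynomiallySeparated K x → PolynomiallySeparated S x := by
  rintro ⟨f, hf⟩
  refine ⟨f, lt_of_le_of_lt ?_ hf⟩
  apply Real.sSup_le_sSup_of_subset_of_nonneg (Set.image_mono hSK)
  · exact hK.bddAbove_image (continuous_eval f).norm.continuousOn
  · rintro _ ⟨z, -, rfl⟩
    exact norm_nonneg _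

theorem polynomiallySeparated_of_eval_ne_zero {X : Set (σ → ℂ)} {x : σ → ℂ}
    {p : MvPolynomial σ ℂ} (hpX : ∀ z ∈ X, eval z p = 0) (hpx : eval x p ≠ 0) :
    PolynomiallySeparated X x := by
  refine ⟨p, lt_of_le_of_lt ?_ (norm_pos_iff.mpr hpx)⟩
  apply Real.sSup_nonpos
  rintro _ ⟨z, hz, rfl⟩
  simp [hpX z hz]

end PolynomiallySeparated

theorem stmt4_general (n : ℕ) (K : Set (Fin n → ℂ)) (hK : IsCompact K)
    (hKpc : ∀ x ∉ K, ∃ f : MvPolynomial (Fin n) ℂ,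
      sSup ((fun z => ‖MvPolynomial.eval z f‖) '' K)
        < ‖MvPolynomial.eval x f‖)
    (p : MvPolynomial (Fin n) ℂ) :
    IsCompact ({z | MvPolynomial.eval z p = 0} ∩ K) ∧
      ∀ x ∉ {z | MvPolynomial.eval z p = 0} ∩ K, ∃ f : MvPolynomial (Fin n) ℂ,
        sSup ((fun z => ‖MvPolynomial.eval z f‖)
            '' ({z | MvPolynomial.eval z p = 0} ∩ K))
          < ‖MvPolynomial.eval x f‖ := by
  have hZ : IsClosed {z : Fin n → ℂ | eval z p = 0} :=
    isClosed_eq (continuous_eval p) continuous_const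
  refine ⟨hK.inter_left hZ, fun x hx => ?_⟩
  by_cases hxK : x ∈ K
  · exact polynomiallySeparated_of_eval_ne_zero (fun z hz => hz.1) fun h => hx ⟨h, hxK⟩
  · exact PolynomiallySeparated.mono hK Set.inter_subset_right (hKpc x hxK)

/-- If `K ⊆ ℂⁿ` is a polynomially convex compact set and `p` is a polynomial with
`Z(p) ∩ K ≠ ∅`, then `Z(p) ∩ K` is a polynomially convex compact set.  Polynomial
convexity of `X`: for every `x ∉ X` there is a polynomial `f` with
`sup_{z ∈ X} |f(z)| < |f(x)|`. -/
theorem stmt4 (n : ℕ) (K : Set (Fin n → ℂ)) (hK : IsCompact K)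
    (hKpc : ∀ x ∉ K, ∃ f : MvPolynomial (Fin n) ℂ,
      sSup ((fun z => ‖MvPolynomial.eval z f‖) '' K)
        < ‖MvPolynomial.eval x f‖)
    (p : MvPolynomial (Fin n) ℂ)
    (hne : ({z | MvPolynomial.eval z p = 0} ∩ K).Nonempty) :
    IsCompact ({z | MvPolynomial.eval z p = 0} ∩ K) ∧
      ∀ x ∉ {z | MvPolynomial.eval z p = 0} ∩ K, ∃ f : MvPolynomial (Fin n) ℂ,
        sSup ((fun z => ‖MvPolynomial.eval z f‖)
            '' ({z | MvPolynomial.eval z p = 0} ∩ K))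
          < ‖MvPolynomial.eval x f‖ :=
  stmt4_general n K hK hKpc p
end

section
/- Let T be a normal bounded operator on a complex Hilbert space and 0 < r < 1. Then (I − T*T)(T*T − r²I) = 0 if and only if T*T + r²·T⁻*T⁻¹ = (1+r²)I whenever T is invertible; moreover, for normal T, (I − T*T)(T*T − r²I) = 0 holds if and only if the spectrum of T*T is contained in {1, r²}. -/
open ContinuousLinearMap

private lemma aux_expand {A : Type*} [Ring A] [Algebra ℂ A] (P : A) (c : ℂ) :
    (1 - P) * (P - c • 1) = (P + c • P) - (P * P + c • 1) := by
  simp only [mul_sub, sub_mul, one_mul, mul_one, mul_smul_comm, smul_mul_assoc]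
  module

private lemma aux_inv {A : Type*} [Ring A] [Algebra ℂ A] (P Q : A) (c : ℂ)
    (hPQ : P * Q = 1) (hQP : Q * P = 1) :
    P * P + c • 1 = P + c • P ↔ P + c • Q = 1 + c • 1 := by
  constructor
  · intro h
    have h2 := congrArg (· * Q) h
    simpa only [add_mul, smul_mul_assoc, one_mul, mul_assoc, hPQ, mul_one] using h2
  · intro h
    have h2 := congrArg (· * P) h
    simpa only [add_mul, smul_mul_assoc, one_mul, mul_assoc, hQP, mul_one] using h2

/-- For a normal operator `T` on a complex Hilbert space and `0 < r < 1`: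
(1) whenever `T` is invertible (with two-sided inverse `S`),
`(I - T*T)(T*T - r²I) = 0` iff `T*T + r²(T⁻¹)*T⁻¹ = (1+r²)I`; moreover,
(2) `(I - T*T)(T*T - r²I) = 0` iff the spectrum of `T*T` is contained in `{1, r²}`. -/
theorem stmt7 {H : Type*} [NormedAddCommGroup H] [InnerProductSpace ℂ H] [CompleteSpace H]
    (r : ℝ) (hr0 : 0 < r) (hr1 : r < 1) (T : H →L[ℂ] H)
    (hnormal : adjoint T * T = T * adjoint T) :
    (∀ S : H →L[ℂ] H, T * S = 1 → S * T = 1 →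
      ((((1 : H →L[ℂ] H) - adjoint T * T)
            * (adjoint T * T - ((r ^ 2 : ℝ) : ℂ) • (1 : H →L[ℂ] H)) = 0)
        ↔ adjoint T * T + ((r ^ 2 : ℝ) : ℂ) • (adjoint S * S)
            = ((1 + r ^ 2 : ℝ) : ℂ) • (1 : H →L[ℂ] H)))
    ∧ ((((1 : H →L[ℂ] H) - adjoint T * T)
            * (adjoint T * T - ((r ^ 2 : ℝ) : ℂ) • (1 : H →L[ℂ] H)) = 0)
        ↔ spectrum ℂ (adjoint T * T) ⊆ {1, ((r ^ 2 : ℝ) : ℂ)}) := by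
  have hPsa : IsSelfAdjoint (adjoint T * T) := by
    simp only [IsSelfAdjoint, star_mul, star_eq_adjoint, adjoint_adjoint]
  have hmain : ((1 : H →L[ℂ] H) - adjoint T * T)
        * (adjoint T * T - ((r ^ 2 : ℝ) : ℂ) • (1 : H →L[ℂ] H)) = 0
      ↔ adjoint T * T * (adjoint T * T) + ((r ^ 2 : ℝ) : ℂ) • (1 : H →L[ℂ] H)
          = adjoint T * T + ((r ^ 2 : ℝ) : ℂ) • (adjoint T * T) := by
    rw [aux_expand, sub_eq_zero, eq_comm]
  constructor
  · intro S hTS hST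
    have hadj1 : adjoint T * adjoint S = 1 := by
      rw [← star_eq_adjoint, ← star_eq_adjoint, ← star_mul, hST, star_one]
    have hadj2 : adjoint S * adjoint T = 1 := by
      rw [← star_eq_adjoint, ← star_eq_adjoint, ← star_mul, hTS, star_one]
    have hPQ : adjoint T * T * (adjoint S * S) = 1 := by
      have : adjoint T * T * (adjoint S * S) = T * (adjoint T * adjoint S * S) := by
        rw [hnormal]; simp only [mul_assoc]
      rw [this, hadj1, one_mul, hTS]
    have hQP : adjoint S * S * (adjoint T * T) = 1 := by
      have : adjoint S * S * (adjoint T * T) = adjoint S * (S * T * adjoint T) := by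
        rw [hnormal]; simp only [mul_assoc]
      rw [this, hST, one_mul, hadj2]
    have hcoef : ((1 + r ^ 2 : ℝ) : ℂ) • (1 : H →L[ℂ] H)
        = 1 + ((r ^ 2 : ℝ) : ℂ) • (1 : H →L[ℂ] H) := by
      have h1 : ((1 + r ^ 2 : ℝ) : ℂ) = 1 + ((r ^ 2 : ℝ) : ℂ) := by push_cast; ring
      rw [h1, add_smul, one_smul]
    rw [hmain, hcoef]
    exact aux_inv _ _ _ hPQ hQP
  · have hsn : IsStarNormal (adjoint T * T) := hPsa.isStarNormal
    set c : ℂ := ((r ^ 2 : ℝ) : ℂ) with hc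
    have hcfc : ((1 : H →L[ℂ] H) - adjoint T * T) * (adjoint T * T - c • 1)
        = cfc (fun z : ℂ => (1 - z) * (z - c)) (adjoint T * T) := by
      rw [cfc_mul _ _ _ (by fun_prop) (by fun_prop)]
      rw [cfc_sub _ _ _ (by fun_prop) (by fun_prop), cfc_sub _ _ _ (by fun_prop) (by fun_prop)]
      rw [cfc_id' ℂ (adjoint T * T) hsn, cfc_const 1 _ hsn, cfc_const c _ hsn, map_one,
        Algebra.algebraMap_eq_smul_one]
    rw [hcfc]
    constructor
    · intro h0 z hz
      have hmem : (fun z : ℂ => (1 - z) * (z - c)) z ∈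
          spectrum ℂ (cfc (fun z : ℂ => (1 - z) * (z - c)) (adjoint T * T)) := by
        rw [cfc_map_spectrum _ _ hsn (by fun_prop)]
        exact ⟨z, hz, rfl⟩
      rw [h0] at hmem
      have hzero : (1 - z) * (z - c) = 0 := by
        by_contra hne
        rw [spectrum.mem_iff, sub_zero] at hmem
        exact hmem ((isUnit_iff_ne_zero.mpr hne).map (algebraMap ℂ _))
      rcases mul_eq_zero.mp hzero with h | h
      · left; rw [sub_eq_zero] at h; exact h.symm
      · right; rwa [sub_eq_zero] at h
    · intro hspec
      have : cfc (fun z : ℂ => (1 - z) * (z - c)) (adjoint T * T)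
          = cfc (fun _ : ℂ => (0 : ℂ)) (adjoint T * T) := by
        apply cfc_congr
        intro z hz
        rcases hspec hz with h | h
        · simp [h]
        · simp [Set.mem_singleton_iff.mp h]
      rw [this, cfc_const 0 _ hsn, map_zero]
end

section
/- Let 0 < r < 1 and let T = [[√r, 1−r],[0, √r]] be the 2×2 complex matrix. Then ‖T‖ = 1 (operator norm), σ(T) = {√r}, T is invertible, and ‖r·T⁻¹‖ ≤ 1; hence T ∈ C_{1,r}. -/
/-!
Write `a = √r`, so `T = !![a, 1 - a²; 0, a]`. For `x = (u, v)` the triangle inequality and the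
identity `(a|u| + (1 - r)|v|)² + a²|v|² = |u|² + |v|² - (1 - r)(|u| - a|v|)²` give `‖T x‖ ≤ ‖x‖`,
with equality at `x = (a, 1)`, which `T` maps to `(1, a)`. Since `det T = r`, the matrix `r • T⁻¹`
is the adjugate `!![a, -(1 - r); 0, a]`, which has the same shape and hence norm at most `1`.
-/

open Matrix

lemma EuclideanSpace.norm_sq_fin_two {𝕜 : Type*} [RCLike 𝕜] (u v : 𝕜) :
    ‖!₂[u, v]‖ ^ 2 = ‖u‖ ^ 2 + ‖v‖ ^ 2 := by
  simp [EuclideanSpace.norm_sq_eq, Fin.sum_univ_two]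

lemma ContinuousLinearMap.one_le_opNorm_of_norm_apply_eq {𝕜 E F : Type*}
    [NontriviallyNormedField 𝕜] [SeminormedAddCommGroup E] [SeminormedAddCommGroup F]
    [NormedSpace 𝕜 E] [NormedSpace 𝕜 F]
    (f : E →L[𝕜] F) {x : E} (hx : ‖x‖ ≠ 0) (h : ‖f x‖ = ‖x‖) : 1 ≤ ‖f‖ := by
  simpa [h, hx] using f.ratio_le_opNorm x

lemma sq_add_sq_le_of_sq_add_le_one {α γ : ℝ} (hγ : 0 ≤ γ) (h : α ^ 2 + γ ≤ 1) (u v : ℝ) :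
    (α * u + γ * v) ^ 2 + (α * v) ^ 2 ≤ u ^ 2 + v ^ 2 := by
  have h' : 0 ≤ 1 - α ^ 2 - γ := by linarith
  nlinarith [mul_nonneg h' (sq_nonneg u), mul_nonneg hγ (sq_nonneg (u - α * v)),
    mul_nonneg (mul_nonneg (by linarith : (0 : ℝ) ≤ 1 + γ) h') (sq_nonneg v)]

namespace Matrix

variable {𝕜 : Type*} [RCLike 𝕜]

lemma toEuclideanCLM_fin_two_of_apply (a b c d : 𝕜) (x : EuclideanSpace 𝕜 (Fin 2)) :
    toEuclideanCLM (𝕜 := 𝕜) !![a, b; c, d] x = !₂[a * x 0 + b * x 1, c * x 0 + d * x 1] := by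
  ext i
  fin_cases i <;> simp [ofLp_toEuclideanCLM, mulVec, dotProduct, Fin.sum_univ_two]

lemma norm_toEuclideanCLM_jordan_le_one (a c : 𝕜) (h : ‖a‖ ^ 2 + ‖c‖ ≤ 1) :
    ‖toEuclideanCLM (𝕜 := 𝕜) !![a, c; 0, a]‖ ≤ 1 := by
  refine ContinuousLinearMap.opNorm_le_bound _ zero_le_one fun x => ?_
  rw [one_mul, toEuclideanCLM_fin_two_of_apply]
  have hx : x = !₂[x 0, x 1] := by ext i; fin_cases i <;> rfl
  conv_rhs => rw [hx]
  refine (pow_le_pow_iff_left₀ (norm_nonneg _) (norm_nonneg _) two_ne_zero).mp ?_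
  rw [EuclideanSpace.norm_sq_fin_two, EuclideanSpace.norm_sq_fin_two, zero_mul, zero_add,
    norm_mul]
  have htri : ‖a * x 0 + c * x 1‖ ≤ ‖a‖ * ‖x 0‖ + ‖c‖ * ‖x 1‖ :=
    (norm_add_le _ _).trans_eq (by rw [norm_mul, norm_mul])
  calc ‖a * x 0 + c * x 1‖ ^ 2 + (‖a‖ * ‖x 1‖) ^ 2
      ≤ (‖a‖ * ‖x 0‖ + ‖c‖ * ‖x 1‖) ^ 2 + (‖a‖ * ‖x 1‖) ^ 2 := by gcongr
    _ ≤ ‖x 0‖ ^ 2 + ‖x 1‖ ^ 2 := sq_add_sq_le_of_sq_add_le_one (norm_nonneg c) h _ _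

lemma one_le_norm_toEuclideanCLM_jordan (a : 𝕜) :
    1 ≤ ‖toEuclideanCLM (𝕜 := 𝕜) !![a, 1 - a ^ 2; 0, a]‖ := by
  have hTx : toEuclideanCLM (𝕜 := 𝕜) !![a, 1 - a ^ 2; 0, a] !₂[a, 1] = !₂[1, a] := by
    rw [toEuclideanCLM_fin_two_of_apply]
    ext i
    fin_cases i <;> simp; ring
  have hnorm : ‖!₂[(1 : 𝕜), a]‖ = ‖!₂[a, 1]‖ := by
    rw [← sq_eq_sq₀ (norm_nonneg _) (norm_nonneg _), EuclideanSpace.norm_sq_fin_two,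
      EuclideanSpace.norm_sq_fin_two, add_comm]
  refine ContinuousLinearMap.one_le_opNorm_of_norm_apply_eq _ ?_ (by rw [hTx, hnorm])
  rw [← hnorm, ne_eq, ← sq_eq_zero_iff, EuclideanSpace.norm_sq_fin_two, norm_one]
  positivity

section Field

variable {K : Type*} [Field K]

lemma spectrum_jordan_fin_two (a b : K) : spectrum K !![a, b; 0, a] = {a} := by
  ext z
  have hsub : algebraMap K (Matrix (Fin 2) (Fin 2) K) z - !![a, b; 0, a] =
      !![z - a, -b; 0, z - a] := by
    ext i j
    fin_cases i <;> fin_cases j <;> simp [algebraMap_matrix_apply]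
  rw [spectrum.mem_iff, isUnit_iff_isUnit_det, hsub, det_fin_two_of, isUnit_iff_ne_zero]
  simp [sub_eq_zero]

lemma det_smul_inv_eq_adjugate {n : Type*} [Fintype n] [DecidableEq n] (A : Matrix n n K)
    (h : IsUnit A.det) : A.det • A⁻¹ = A.adjugate := by
  rw [A.nonsing_inv_apply h, smul_smul, h.mul_val_inv, one_smul]

end Field

end Matrix

/-- For `0 < r < 1`, the matrix `T = [[√r, 1-r],[0, √r]]` satisfies `‖T‖ = 1`
(operator norm on Euclidean space), `σ(T) = {√r}`, `T` is invertible, and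
`‖r·T⁻¹‖ ≤ 1`; hence `T ∈ C_{1,r}`. -/
theorem stmt8 (r : ℝ) (hr0 : 0 < r) (hr1 : r < 1)
    (T : Matrix (Fin 2) (Fin 2) ℂ)
    (hT : T = !![((Real.sqrt r : ℝ) : ℂ), ((1 - r : ℝ) : ℂ);
                 0, ((Real.sqrt r : ℝ) : ℂ)]) :
    ‖Matrix.toEuclideanCLM (𝕜 := ℂ) T‖ = 1
      ∧ spectrum ℂ T = {((Real.sqrt r : ℝ) : ℂ)}
      ∧ IsUnit T
      ∧ ‖Matrix.toEuclideanCLM (𝕜 := ℂ) ((r : ℂ) • T⁻¹)‖ ≤ 1 := by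
  have hsq : ((Real.sqrt r : ℝ) : ℂ) ^ 2 = r := by
    rw [← Complex.ofReal_pow, Real.sq_sqrt hr0.le]
  have hnorms : ‖((Real.sqrt r : ℝ) : ℂ)‖ ^ 2 + ‖((1 - r : ℝ) : ℂ)‖ ≤ 1 := by
    rw [← norm_pow, hsq, Complex.norm_real, Complex.norm_real, Real.norm_of_nonneg hr0.le,
      Real.norm_of_nonneg (by linarith)]
    linarith
  have hdet : T.det = r := by
    rw [hT, det_fin_two_of, mul_zero, sub_zero, ← sq, hsq]
  have hdet_unit : IsUnit T.det := hdet ▸ (Complex.ofReal_ne_zero.mpr hr0.ne').isUnit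
  refine ⟨le_antisymm ?_ ?_, hT ▸ spectrum_jordan_fin_two _ _,
    (isUnit_iff_isUnit_det T).mpr hdet_unit, ?_⟩
  · exact hT ▸ norm_toEuclideanCLM_jordan_le_one _ _ hnorms
  · have hc : ((1 - r : ℝ) : ℂ) = 1 - ((Real.sqrt r : ℝ) : ℂ) ^ 2 := by
      rw [hsq, Complex.ofReal_sub, Complex.ofReal_one]
    exact hT ▸ hc ▸ one_le_norm_toEuclideanCLM_jordan _
  · rw [← hdet, det_smul_inv_eq_adjugate T hdet_unit, hT, adjugate_fin_two_of, neg_zero]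
    exact norm_toEuclideanCLM_jordan_le_one _ _ (by rwa [norm_neg])
end

section
/- Let 0 < r < 1, let ω > 0 be a positive invertible operator on a Hilbert space E, and let M_z be multiplication by z on H²(A_r, E, ω). Then for every f, (1+r²)‖f‖² − ‖M_z f‖² − ‖r M_z⁻¹ f‖² = 0, i.e., M_z*M_z + r²(M_z⁻¹)*M_z⁻¹ = (1+r²)I; hence M_z is an A_r-isometry. -/
open scoped Real

/-!
On the outer circle `|z| = 1` the multipliers `z` and `r z⁻¹` have moduli `1` and `r`; on the
inner circle `|z| = r` they have moduli `r` and `1`. In both cases the squared moduli add up to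
`1 + r²`. Since `ω` is `ℂ`-linear it commutes with these scalars, so the defect vanishes
pointwise on each boundary circle, hence after integration.
-/

open Complex

section UnitModulus

variable {V : Type*} [NormedAddCommGroup V] [NormedSpace ℂ V] {c : ℂ}

lemma norm_smul_sq_of_norm_eq_one (hc : ‖c‖ = 1) (x : V) : ‖c • x‖ ^ 2 = ‖x‖ ^ 2 := by
  rw [norm_smul, hc, one_mul]

lemma norm_ofReal_mul_smul_sq_of_norm_eq_one (hc : ‖c‖ = 1) (r : ℝ) (x : V) :
    ‖((r : ℂ) * c) • x‖ ^ 2 = r ^ 2 * ‖x‖ ^ 2 := by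
  rw [norm_smul, norm_mul, hc, mul_one, norm_real, Real.norm_eq_abs, mul_pow, sq_abs]

lemma norm_inv_eq_one_of_norm_eq_one (hc : ‖c‖ = 1) : ‖c⁻¹‖ = 1 := by
  rw [norm_inv, hc, inv_one]

end UnitModulus

lemma mul_mul_inv_cancel_left₀ {K : Type*} [Field K] {a : K} (ha : a ≠ 0) (b : K) :
    a * (a * b)⁻¹ = b⁻¹ := by
  rw [mul_inv, mul_inv_cancel_left₀ ha]

theorem stmt14_general {E : Type*} [NormedAddCommGroup E] [InnerProductSpace ℂ E]
    (r : ℝ) (hr0 : 0 < r)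
    (ω : E →L[ℂ] E) :
    ∀ f : ℂ → E, Continuous f →
      (1 + r ^ 2) *
          ((∫ t in (0:ℝ)..(2 * π), ‖f (Complex.exp (t * Complex.I))‖ ^ 2) / (2 * π)
            + (∫ t in (0:ℝ)..(2 * π),
                ‖ω (f ((r : ℂ) * Complex.exp (t * Complex.I)))‖ ^ 2) / (2 * π))
        - ((∫ t in (0:ℝ)..(2 * π),
              ‖(Complex.exp (t * Complex.I)) • f (Complex.exp (t * Complex.I))‖ ^ 2) / (2 * π)
            + (∫ t in (0:ℝ)..(2 * π),
              ‖ω (((r : ℂ) * Complex.exp (t * Complex.I)) •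
                  f ((r : ℂ) * Complex.exp (t * Complex.I)))‖ ^ 2) / (2 * π))
        - ((∫ t in (0:ℝ)..(2 * π),
              ‖((r : ℂ) * (Complex.exp (t * Complex.I))⁻¹) •
                  f (Complex.exp (t * Complex.I))‖ ^ 2) / (2 * π)
            + (∫ t in (0:ℝ)..(2 * π),
              ‖ω (((r : ℂ) * ((r : ℂ) * Complex.exp (t * Complex.I))⁻¹) •
                  f ((r : ℂ) * Complex.exp (t * Complex.I)))‖ ^ 2) / (2 * π))
        = 0 := by
  intro f _
  have hu (t : ℝ) : ‖exp (t * I)‖ = 1 := norm_exp_ofReal_mul_I t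
  have hr : (r : ℂ) ≠ 0 := ofReal_ne_zero.mpr hr0.ne'
  simp only [mul_mul_inv_cancel_left₀ hr, map_smul, norm_smul_sq_of_norm_eq_one (hu _),
    norm_smul_sq_of_norm_eq_one (norm_inv_eq_one_of_norm_eq_one (hu _)),
    norm_ofReal_mul_smul_sq_of_norm_eq_one (hu _),
    norm_ofReal_mul_smul_sq_of_norm_eq_one (norm_inv_eq_one_of_norm_eq_one (hu _)),
    intervalIntegral.integral_const_mul]
  ring

/-- On the Hardy space `H²(A_r, E, ω)` with norm
`‖f‖² = (1/2π)∫‖f(e^{it})‖²dt + (1/2π)∫‖ω f(re^{it})‖²dt`, the multiplication operator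
`M_z f(z) = z f(z)` satisfies `(1+r²)‖f‖² - ‖M_z f‖² - ‖r M_z⁻¹ f‖² = 0` for every `f`;
i.e. `M_z*M_z + r²(M_z⁻¹)*M_z⁻¹ = (1+r²)I`, so `M_z` is an `A_r`-isometry. -/
theorem stmt14 {E : Type*} [NormedAddCommGroup E] [InnerProductSpace ℂ E] [CompleteSpace E]
    (r : ℝ) (hr0 : 0 < r) (hr1 : r < 1)
    (ω : E →L[ℂ] E) (hω : ω.IsPositive) (hωu : IsUnit ω) :
    ∀ f : ℂ → E, Continuous f →
      (1 + r ^ 2) *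
          ((∫ t in (0:ℝ)..(2 * π), ‖f (Complex.exp (t * Complex.I))‖ ^ 2) / (2 * π)
            + (∫ t in (0:ℝ)..(2 * π),
                ‖ω (f ((r : ℂ) * Complex.exp (t * Complex.I)))‖ ^ 2) / (2 * π))
        - ((∫ t in (0:ℝ)..(2 * π),
              ‖(Complex.exp (t * Complex.I)) • f (Complex.exp (t * Complex.I))‖ ^ 2) / (2 * π)
            + (∫ t in (0:ℝ)..(2 * π),
              ‖ω (((r : ℂ) * Complex.exp (t * Complex.I)) •
                  f ((r : ℂ) * Complex.exp (t * Complex.I)))‖ ^ 2) / (2 * π))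
        - ((∫ t in (0:ℝ)..(2 * π),
              ‖((r : ℂ) * (Complex.exp (t * Complex.I))⁻¹) •
                  f (Complex.exp (t * Complex.I))‖ ^ 2) / (2 * π)
            + (∫ t in (0:ℝ)..(2 * π),
              ‖ω (((r : ℂ) * ((r : ℂ) * Complex.exp (t * Complex.I))⁻¹) •
                  f ((r : ℂ) * Complex.exp (t * Complex.I)))‖ ^ 2) / (2 * π))
        = 0 :=
  stmt14_general r hr0 ω
end

section
/- Let 0 < r < 1 and let f = (…,0, f₀=0, f₁=1, 0,…) ∈ H²(Ω_r, ℂ) (i.e., f_1 = 1 and all other coefficients 0). Let M_z^{t*} be the adjoint of the shift M_z^t, so that M_z^{t*}f = (…,0, f₀' = r², 0,…) and (M_z^{t*})²f = (…, −r² at position −1, 0, …). Then for any 0 < s < 1, (1+s²)‖M_z^{t*}f‖² − ‖(M_z^{t*})²f‖² − s²‖f‖² = −s²r² < 0. -/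
/-- The adjoint `M_z^{t*}` of the weighted shift on `H²(Ω_r, ℂ)`. -/
def adjShift (r : ℝ) (f : ℤ → ℂ) : ℤ → ℂ := fun n =>
  if n = -1 then -f 0 else if 0 ≤ n then (r : ℂ) ^ 2 * f (n + 1) else f (n + 1)

noncomputable def h2NormSq (r : ℝ) (f : ℤ → ℂ) : ℝ :=
  (1 - r ^ 2)⁻¹ * ∑' n : ℤ, (if 0 ≤ n then r ^ (2 * n) else 1) * ‖f n‖ ^ 2

theorem tsum_mul_norm_sq_single {ι E : Type*} [DecidableEq ι] [SeminormedAddCommGroup E]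
    (w : ι → ℝ) (k : ι) (c : E) :
    ∑' n, w n * ‖Pi.single (M := fun _ => E) k c n‖ ^ 2 = w k * ‖c‖ ^ 2 := by
  rw [tsum_eq_single k fun n hn => by simp [Pi.single_eq_of_ne hn], Pi.single_eq_same]

theorem h2NormSq_single (r : ℝ) (k : ℤ) (c : ℂ) :
    h2NormSq r (Pi.single k c) = (1 - r ^ 2)⁻¹ * ((if 0 ≤ k then r ^ (2 * k) else 1) * ‖c‖ ^ 2) :=
  congrArg _ (tsum_mul_norm_sq_single _ k c)

theorem adjShift_single_one (r : ℝ) (c : ℂ) :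
    adjShift r (Pi.single 1 c) = Pi.single 0 ((r : ℂ) ^ 2 * c) := by
  ext n
  unfold adjShift
  rcases lt_trichotomy n 0 with hn | rfl | hn
  · simp [show n + 1 ≠ 1 by omega, hn.ne, hn.not_ge]
  · simp
  · simp [show n + 1 ≠ 1 by omega, hn.ne', hn.le, show n ≠ -1 by omega]

theorem adjShift_single_zero (r : ℝ) (c : ℂ) :
    adjShift r (Pi.single 0 c) = Pi.single (-1) (-c) := by
  ext n
  unfold adjShift
  rcases lt_trichotomy n (-1) with hn | rfl | hn
  · simp [show n + 1 ≠ 0 by omega, hn.ne, show ¬ 0 ≤ n by omega]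
  · simp
  · simp [show n + 1 ≠ 0 by omega, hn.ne', show 0 ≤ n by omega]

theorem stmt17_general (r s : ℝ) (hr0 : 0 < r) (hr1 : r < 1) (hs0 : 0 < s)
    (Nsq : (ℤ → ℂ) → ℝ)
    (hN : ∀ f : ℤ → ℂ, Nsq f
      = (1 - r ^ 2)⁻¹ * ∑' n : ℤ, (if 0 ≤ n then r ^ (2 * n) else 1) * ‖f n‖ ^ 2)
    (g : (ℤ → ℂ) → (ℤ → ℂ))
    (hg : ∀ (f : ℤ → ℂ) (n : ℤ), g f n
      = if n = -1 then -f 0 else if 0 ≤ n then ((r : ℂ)) ^ 2 * f (n + 1) else f (n + 1))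
    (f : ℤ → ℂ) (hf : ∀ n : ℤ, f n = if n = 1 then 1 else 0) :
    (1 + s ^ 2) * Nsq (g f) - Nsq (g (g f)) - s ^ 2 * Nsq f = -(s ^ 2 * r ^ 2)
      ∧ -(s ^ 2 * r ^ 2) < 0 := by
  obtain rfl : Nsq = h2NormSq r := funext hN
  obtain rfl : g = adjShift r := funext fun f => funext (hg f)
  obtain rfl : f = Pi.single 1 1 := funext fun n => by simp [hf, Pi.single_apply]
  have hr2 : 1 - r ^ 2 ≠ 0 := by nlinarith
  refine ⟨?_, neg_neg_of_pos (by positivity)⟩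
  simp only [adjShift_single_one, adjShift_single_zero, h2NormSq_single]
  norm_num [abs_of_pos hr0]
  field_simp
  ring

/-- In `H²(Ω_r, ℂ)` (two-sided sequences with
`‖f‖² = (1-r²)⁻¹(Σ_{n≥0} r^{2n}|f_n|² + Σ_{n<0}|f_n|²)`), for the sequence `f` with
`f₁ = 1` and all other entries `0`, and the adjoint shift `g = M_z^{t*}` acting by
`(g f)_{-1} = -f₀`, `(g f)_n = r² f_{n+1}` for `n ≥ 0`, `(g f)_n = f_{n+1}` for `n < -1`,
one has `(1+s²)‖g f‖² - ‖g² f‖² - s²‖f‖² = -s²r² < 0` for every `0 < s < 1`. -/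
theorem stmt17 (r s : ℝ) (hr0 : 0 < r) (hr1 : r < 1) (hs0 : 0 < s) (hs1 : s < 1)
    (Nsq : (ℤ → ℂ) → ℝ)
    (hN : ∀ f : ℤ → ℂ, Nsq f
      = (1 - r ^ 2)⁻¹ * ∑' n : ℤ, (if 0 ≤ n then r ^ (2 * n) else 1) * ‖f n‖ ^ 2)
    (g : (ℤ → ℂ) → (ℤ → ℂ))
    (hg : ∀ (f : ℤ → ℂ) (n : ℤ), g f n
      = if n = -1 then -f 0 else if 0 ≤ n then ((r : ℂ)) ^ 2 * f (n + 1) else f (n + 1))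
    (f : ℤ → ℂ) (hf : ∀ n : ℤ, f n = if n = 1 then 1 else 0) :
    (1 + s ^ 2) * Nsq (g f) - Nsq (g (g f)) - s ^ 2 * Nsq f = -(s ^ 2 * r ^ 2)
      ∧ -(s ^ 2 * r ^ 2) < 0 :=
  stmt17_general r s hr0 hr1 hs0 Nsq hN g hg f hf
end

section
/- Let 0 < r < 1 and let T be an invertible bounded operator on a Hilbert space H. Suppose Y ⊆ ℂ \ {0} contains σ(T) and for every rational function f with no poles in Y, ‖f(T)‖ ≤ sup_{y∈Y}|f(y)|. Then for the pair κ(T) = (T/√(1+r²), rT⁻¹/√(1+r²)) and every rational function g in two variables with no singularities on κ(Y), ‖g(κ(T))‖ ≤ sup{|g(w)| : w ∈ κ(Y)}; conversely, if κ(Y) is a von Neumann set for κ(T), then Y is one for T. -/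
/-!
Both inequalities transfer by substitution. A polynomial `p(z₁, z₂)` evaluated at
`κ(z) = (z / c, ρ z⁻¹ / c)` becomes, after multiplication by `z ^ N` for `N` large, a
polynomial `P(z)`, and on the operator side `p(κ(T)) T ^ N = P(T)`; the factor `T ^ N` is
invertible and cancels from the quotient `p(κ(T)) q(κ(T))⁻¹`, so the one-variable inequality
for `P / Q` is the two-variable one for `p / q`. Conversely a polynomial `f(z)` is `F(κ(z))`
with `F(z₁, z₂) = f(c z₁)`, and `F(κ(T)) = f(T)`.
-/

/-- Evaluation of a two-variable polynomial on a commuting pair of operators. -/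
noncomputable def mvEval2 {H : Type*} [NormedAddCommGroup H] [InnerProductSpace ℂ H]
    (A B : H →L[ℂ] H) (p : MvPolynomial (Fin 2) ℂ) : H →L[ℂ] H :=
  (AddMonoidAlgebra.coeff p).sum fun m c => c • (A ^ (m 0) * B ^ (m 1))

section

variable {M₀ : Type*} [MonoidWithZero M₀]

theorem Ring.inverse_mul_units (a : M₀) (w : M₀ˣ) :
    Ring.inverse (a * w) = ↑w⁻¹ * Ring.inverse a := by
  by_cases ha : IsUnit a
  · obtain ⟨a, rfl⟩ := ha
    rw [← Units.val_mul, Ring.inverse_unit, Ring.inverse_unit, mul_inv_rev, Units.val_mul]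
  · rw [Ring.inverse_non_unit _ ha,
      Ring.inverse_non_unit _ (mt (Units.isUnit_mul_units a w).1 ha), mul_zero]

theorem mul_units_mul_inverse_mul_units (a b : M₀) (w : M₀ˣ) :
    a * w * Ring.inverse (b * w) = a * Ring.inverse b := by
  rw [Ring.inverse_mul_units, mul_assoc, Units.mul_inv_cancel_left]

theorem Units.pow_mul_inv_pow_mul_pow (u : M₀ˣ) {a b N : ℕ} (hb : b ≤ N) :
    (u : M₀) ^ a * ↑u⁻¹ ^ b * ↑u ^ N = ↑u ^ (N + a - b) := by
  obtain ⟨k, rfl⟩ := Nat.exists_eq_add_of_le hb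
  rw [show b + k + a - b = k + a by omega]
  norm_cast
  group

end

/-- The map `κ` with `c = √(1 + r²)` and `ρ = r`. -/
noncomputable def kappa (c ρ : ℂ) (z : ℂ) : ℂ × ℂ := (z / c, ρ * z⁻¹ / c)

@[simp]
theorem kappa_fst (c ρ z : ℂ) : (kappa c ρ z).1 = z / c := rfl

@[simp]
theorem kappa_snd (c ρ z : ℂ) : (kappa c ρ z).2 = ρ * z⁻¹ / c := rfl

theorem kappa_injective {c : ℂ} (hc : c ≠ 0) (ρ : ℂ) : Function.Injective (kappa c ρ) :=
  fun _ _ h => (div_left_inj' hc).1 (congrArg Prod.fst h)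

/-- `z ^ N * p (z / c, ρ z⁻¹ / c)` as a polynomial in `z`, valid once `N` bounds the degree
of `p` in its second variable (otherwise the truncated exponent `N + m 0 - m 1` is wrong). -/
noncomputable def kappaPullback (c ρ : ℂ) (N : ℕ) (p : MvPolynomial (Fin 2) ℂ) :
    Polynomial ℂ :=
  ∑ m ∈ p.support,
    Polynomial.monomial (N + m 0 - m 1) (p.coeff m * ρ ^ m 1 * c⁻¹ ^ (m 0 + m 1))

theorem eval_kappaPullback {c ρ z : ℂ} (hz : z ≠ 0) {N : ℕ}
    {p : MvPolynomial (Fin 2) ℂ} (hN : ∀ m ∈ p.support, m 1 ≤ N) :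
    (kappaPullback c ρ N p).eval z
      = z ^ N * MvPolynomial.eval ![(kappa c ρ z).1, (kappa c ρ z).2] p := by
  rw [MvPolynomial.eval_eq', kappaPullback, Polynomial.eval_finsetSum, Finset.mul_sum]
  refine Finset.sum_congr rfl fun m hm => ?_
  have hpow : z ^ (N + m 0 - m 1) = z ^ (N + m 0) * z⁻¹ ^ m 1 := by
    rw [pow_sub₀ z hz (by grind), inv_pow]
  simp only [Polynomial.eval_monomial, Fin.prod_univ_two, Matrix.cons_val_zero,
    Matrix.cons_val_one, kappa_fst, kappa_snd, hpow]
  ring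

theorem div_eval_kappaPullback {c ρ z : ℂ} (hz : z ≠ 0) {N : ℕ}
    {p q : MvPolynomial (Fin 2) ℂ} (hp : ∀ m ∈ p.support, m 1 ≤ N)
    (hq : ∀ m ∈ q.support, m 1 ≤ N) :
    (kappaPullback c ρ N p).eval z / (kappaPullback c ρ N q).eval z
      = MvPolynomial.eval ![(kappa c ρ z).1, (kappa c ρ z).2] p
        / MvPolynomial.eval ![(kappa c ρ z).1, (kappa c ρ z).2] q := by
  rw [eval_kappaPullback hz hp, eval_kappaPullback hz hq,
    mul_div_mul_left _ _ (pow_ne_zero N hz)]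

noncomputable def liftFst (c : ℂ) (f : Polynomial ℂ) : MvPolynomial (Fin 2) ℂ :=
  Polynomial.aeval (MvPolynomial.C c * MvPolynomial.X 0) f

theorem eval_liftFst (c : ℂ) (f : Polynomial ℂ) (x : Fin 2 → ℂ) :
    MvPolynomial.eval x (liftFst c f) = f.eval (c * x 0) := by
  change MvPolynomial.aeval x (liftFst c f) = _
  rw [liftFst, ← Polynomial.aeval_algHom_apply]
  simp

theorem liftFst_monomial (c a : ℂ) (n : ℕ) :
    liftFst c (Polynomial.monomial n a)
      = MvPolynomial.monomial (Finsupp.single 0 n) (a * c ^ n) := by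
  rw [liftFst, Polynomial.aeval_monomial, mul_pow, ← map_pow, MvPolynomial.X_pow_eq_monomial,
    MvPolynomial.algebraMap_eq, ← mul_assoc, ← map_mul, MvPolynomial.C_mul_monomial, mul_one]

section Operators

variable {H : Type*} [NormedAddCommGroup H] [InnerProductSpace ℂ H]

/-- `Ring.inverse` is `0` off the units, so only `q` with `q(T)` invertible constrain anything. -/
def VonNeumannBound (T : H →L[ℂ] H) (Y : Set ℂ) : Prop :=
  ∀ p q : Polynomial ℂ, (∀ z ∈ Y, Polynomial.eval z q ≠ 0) →
    ENNReal.ofReal ‖Polynomial.aeval T p * Ring.inverse (Polynomial.aeval T q)‖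
      ≤ ⨆ z ∈ Y, ENNReal.ofReal ‖Polynomial.eval z p / Polynomial.eval z q‖

def VonNeumannBound₂ (A B : H →L[ℂ] H) (K : Set (ℂ × ℂ)) : Prop :=
  ∀ p q : MvPolynomial (Fin 2) ℂ, (∀ w ∈ K, MvPolynomial.eval ![w.1, w.2] q ≠ 0) →
    ENNReal.ofReal ‖mvEval2 A B p * Ring.inverse (mvEval2 A B q)‖
      ≤ ⨆ w ∈ K, ENNReal.ofReal
          ‖MvPolynomial.eval ![w.1, w.2] p / MvPolynomial.eval ![w.1, w.2] q‖

theorem mvEval2_add (A B : H →L[ℂ] H) (p q : MvPolynomial (Fin 2) ℂ) :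
    mvEval2 A B (p + q) = mvEval2 A B p + mvEval2 A B q := by
  unfold mvEval2
  rw [AddMonoidAlgebra.coeff_add]
  exact Finsupp.sum_add_index' (fun _ => zero_smul ℂ _) (fun _ _ _ => add_smul _ _ _)

theorem mvEval2_monomial (A B : H →L[ℂ] H) (d : Fin 2 →₀ ℕ) (a : ℂ) :
    mvEval2 A B (MvPolynomial.monomial d a) = a • (A ^ d 0 * B ^ d 1) :=
  MvPolynomial.sum_monomial_eq (zero_smul ℂ _)

theorem mvEval2_eq_sum (A B : H →L[ℂ] H) (p : MvPolynomial (Fin 2) ℂ) :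
    mvEval2 A B p = ∑ m ∈ p.support, p.coeff m • (A ^ m 0 * B ^ m 1) :=
  rfl

theorem mvEval2_kappa_mul_pow (c ρ : ℂ) (u : (H →L[ℂ] H)ˣ) {N : ℕ}
    {p : MvPolynomial (Fin 2) ℂ} (hN : ∀ m ∈ p.support, m 1 ≤ N) :
    mvEval2 (c⁻¹ • (u : H →L[ℂ] H)) ((ρ / c) • (↑u⁻¹ : H →L[ℂ] H)) p * ↑u ^ N
      = Polynomial.aeval (u : H →L[ℂ] H) (kappaPullback c ρ N p) := by
  rw [mvEval2_eq_sum, kappaPullback, Finset.sum_mul, map_sum]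
  refine Finset.sum_congr rfl fun m hm => ?_
  rw [Polynomial.aeval_monomial, ← Algebra.smul_def,
    ← u.pow_mul_inv_pow_mul_pow (a := m 0) (hN m hm)]
  simp only [smul_pow, smul_mul_assoc, mul_smul_comm, smul_smul, mul_assoc]
  congr 1
  ring

theorem vonNeumannBound₂_kappa_of_vonNeumannBound {c : ℂ} (ρ : ℂ) (u : (H →L[ℂ] H)ˣ)
    {Y : Set ℂ} (hY : 0 ∉ Y) (h : VonNeumannBound (u : H →L[ℂ] H) Y) :
    VonNeumannBound₂ (c⁻¹ • (u : H →L[ℂ] H)) ((ρ / c) • (↑u⁻¹ : H →L[ℂ] H))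
      (kappa c ρ '' Y) := by
  intro p q hq
  rw [Set.forall_mem_image] at hq
  set N := (p.support ∪ q.support).sup fun m => m 1
  have hp : ∀ m ∈ p.support, m 1 ≤ N := fun m hm =>
    Finset.le_sup (f := fun m => m 1) (Finset.mem_union_left _ hm)
  have hq' : ∀ m ∈ q.support, m 1 ≤ N := fun m hm =>
    Finset.le_sup (f := fun m => m 1) (Finset.mem_union_right _ hm)
  have hY' : ∀ z ∈ Y, z ≠ 0 := fun z hz h => hY (h ▸ hz)
  calc _
      = ENNReal.ofReal ‖Polynomial.aeval (u : H →L[ℂ] H) (kappaPullback c ρ N p)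
          * Ring.inverse (Polynomial.aeval (u : H →L[ℂ] H) (kappaPullback c ρ N q))‖ := by
        rw [← mvEval2_kappa_mul_pow c ρ u hp, ← mvEval2_kappa_mul_pow c ρ u hq',
          ← Units.val_pow_eq_pow_val, mul_units_mul_inverse_mul_units]
    _ ≤ ⨆ z ∈ Y, ENNReal.ofReal
          ‖(kappaPullback c ρ N p).eval z / (kappaPullback c ρ N q).eval z‖ := by
        refine h _ _ fun z hz => ?_
        rw [eval_kappaPullback (hY' z hz) hq']
        exact mul_ne_zero (pow_ne_zero _ (hY' z hz)) (hq hz)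
    _ = _ := by
        rw [iSup_image]
        refine iSup_congr fun z => iSup_congr fun hz => ?_
        rw [div_eval_kappaPullback (hY' z hz) hp hq']

theorem mvEval2_liftFst {c : ℂ} (hc : c ≠ 0) (T B : H →L[ℂ] H) (f : Polynomial ℂ) :
    mvEval2 (c⁻¹ • T) B (liftFst c f) = Polynomial.aeval T f := by
  induction f using Polynomial.induction_on' with
  | add f g hf hg => rw [liftFst, map_add, ← liftFst, ← liftFst, mvEval2_add, hf, hg, map_add]
  | monomial n a =>
    rw [liftFst_monomial, mvEval2_monomial, Polynomial.aeval_monomial, ← Algebra.smul_def]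
    simp [smul_pow, smul_smul, hc]

theorem vonNeumannBound_of_vonNeumannBound₂_kappa {c : ℂ} (hc : c ≠ 0) (ρ : ℂ)
    (T B : H →L[ℂ] H) {Y : Set ℂ}
    (h : VonNeumannBound₂ (c⁻¹ • T) B (kappa c ρ '' Y)) :
    VonNeumannBound T Y := by
  intro p q hq
  have hκ : ∀ z, c * (![(kappa c ρ z).1, (kappa c ρ z).2] 0) = z := fun z =>
    mul_div_cancel₀ z hc
  have key := h (liftFst c p) (liftFst c q) <| Set.forall_mem_image.2 fun z hz => by
    rw [eval_liftFst, hκ]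
    exact hq z hz
  simpa only [mvEval2_liftFst hc, iSup_image, eval_liftFst, hκ] using key

end Operators

theorem stmt18_general {H : Type*} [NormedAddCommGroup H] [InnerProductSpace ℂ H]
    (r : ℝ)
    (T Tinv : H →L[ℂ] H) (hT1 : T * Tinv = 1) (hT2 : Tinv * T = 1)
    (Y : Set ℂ) (hY : (0 : ℂ) ∉ Y)
    (κ : ℂ → ℂ × ℂ)
    (hκ : κ = fun z => (z / (Real.sqrt (1 + r ^ 2) : ℂ),
      (r : ℂ) * z⁻¹ / (Real.sqrt (1 + r ^ 2) : ℂ)))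
    (T₁ T₂ : H →L[ℂ] H)
    (hT₁ : T₁ = ((Real.sqrt (1 + r ^ 2) : ℂ))⁻¹ • T)
    (hT₂ : T₂ = ((r : ℂ) / (Real.sqrt (1 + r ^ 2) : ℂ)) • Tinv) :
    (spectrum ℂ T ⊆ Y
      ∧ ∀ p q : Polynomial ℂ, (∀ z ∈ Y, Polynomial.eval z q ≠ 0) →
          ENNReal.ofReal ‖Polynomial.aeval T p * Ring.inverse (Polynomial.aeval T q)‖
            ≤ ⨆ z ∈ Y, ENNReal.ofReal
                ‖Polynomial.eval z p / Polynomial.eval z q‖)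
    ↔ (κ '' spectrum ℂ T ⊆ κ '' Y
      ∧ ∀ p q : MvPolynomial (Fin 2) ℂ,
          (∀ w ∈ κ '' Y, MvPolynomial.eval ![w.1, w.2] q ≠ 0) →
          ENNReal.ofReal ‖mvEval2 T₁ T₂ p * Ring.inverse (mvEval2 T₁ T₂ q)‖
            ≤ ⨆ w ∈ κ '' Y, ENNReal.ofReal
                ‖MvPolynomial.eval ![w.1, w.2] p
                  / MvPolynomial.eval ![w.1, w.2] q‖) := by
  set c : ℂ := (Real.sqrt (1 + r ^ 2) : ℂ)
  have hc : c ≠ 0 := Complex.ofReal_ne_zero.2 (Real.sqrt_pos.2 (by positivity)).ne'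
  obtain rfl : κ = kappa c r := hκ
  let u : (H →L[ℂ] H)ˣ := ⟨T, Tinv, hT1, hT2⟩
  subst hT₁ hT₂
  rw [Set.image_subset_image_iff (kappa_injective hc _)]
  exact and_congr_right fun _ =>
    ⟨vonNeumannBound₂_kappa_of_vonNeumannBound (r : ℂ) u hY,
      vonNeumannBound_of_vonNeumannBound₂_kappa hc _ T _⟩

/-- For an invertible operator `T` and `Y ⊆ ℂ \ {0}`: `Y` is a von Neumann set for `T`
(i.e. `σ(T) ⊆ Y` and `‖f(T)‖ ≤ sup_Y |f|` for all rational `f` without poles in `Y`)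
iff `κ(Y)` is a von Neumann set for `κ(T) = (T/√(1+r²), rT⁻¹/√(1+r²))`, where
`κ(z) = (z/√(1+r²), rz⁻¹/√(1+r²))` (Taylor spectrum of `κ(T)` being `κ(σ(T))`). -/
theorem stmt18 {H : Type*} [NormedAddCommGroup H] [InnerProductSpace ℂ H] [CompleteSpace H]
    (r : ℝ) (hr0 : 0 < r) (hr1 : r < 1)
    (T Tinv : H →L[ℂ] H) (hT1 : T * Tinv = 1) (hT2 : Tinv * T = 1)
    (Y : Set ℂ) (hY : (0 : ℂ) ∉ Y)
    (κ : ℂ → ℂ × ℂ)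
    (hκ : κ = fun z => (z / (Real.sqrt (1 + r ^ 2) : ℂ),
      (r : ℂ) * z⁻¹ / (Real.sqrt (1 + r ^ 2) : ℂ)))
    (T₁ T₂ : H →L[ℂ] H)
    (hT₁ : T₁ = ((Real.sqrt (1 + r ^ 2) : ℂ))⁻¹ • T)
    (hT₂ : T₂ = ((r : ℂ) / (Real.sqrt (1 + r ^ 2) : ℂ)) • Tinv) :
    (spectrum ℂ T ⊆ Y
      ∧ ∀ p q : Polynomial ℂ, (∀ z ∈ Y, Polynomial.eval z q ≠ 0) →
          ENNReal.ofReal ‖Polynomial.aeval T p * Ring.inverse (Polynomial.aeval T q)‖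
            ≤ ⨆ z ∈ Y, ENNReal.ofReal
                ‖Polynomial.eval z p / Polynomial.eval z q‖)
    ↔ (κ '' spectrum ℂ T ⊆ κ '' Y
      ∧ ∀ p q : MvPolynomial (Fin 2) ℂ,
          (∀ w ∈ κ '' Y, MvPolynomial.eval ![w.1, w.2] q ≠ 0) →
          ENNReal.ofReal ‖mvEval2 T₁ T₂ p * Ring.inverse (mvEval2 T₁ T₂ q)‖
            ≤ ⨆ w ∈ κ '' Y, ENNReal.ofReal
                ‖MvPolynomial.eval ![w.1, w.2] p
                  / MvPolynomial.eval ![w.1, w.2] q‖) :=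
  stmt18_general r T Tinv hT1 hT2 Y hY κ hκ T₁ T₂ hT₁ hT₂
end
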